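/- Let m ≥ 1 and let u : ℝ^m → ℝ be a smooth, proper (preimages of compact sets are compact), nonnegative function whose critical set is exactly one point p₀, with u(p₀) = 0, and assume the second derivative D²u_{p₀} is positive definite. Assume that for every p ≠ p₀ and every nonzero vector x with Du_p(x) = 0 one has D²u_p(x,x) > 0. Let N : ℝ^m ∖ {p₀} → ℝ^m be a smooth vector field with Du_p(N(p)) > 0 for all p ≠ p₀. For a > 0 define μ(a) = inf{ [D²u_p(x,x)·D²u_p(N(p),N(p)) − (D²u_p(x,N(p)))²] / [ (Du_p(N(p)))² · D²u_p(x,x) ] : p ∈ u⁻¹(a), x ≠ 0, Du_p(x) = 0 }, with μ(a) = +∞ if the index set is empty. If there exists a continuous function h : [0,∞) → ℝ with μ(a) ≥ h(a) for all a > 0, then there exists a smooth function ρ : [0,∞) → [0,∞) with ρ′ ≥ 1 everywhere such that f = ρ ∘ u is proper and strictly convex, i.e. D²f_p is positive definite for every p ∈ ℝ^m. -/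

import Mathlib

open Set

/-- The second Fréchet derivative of `u` at `p`, applied to `x, y`. -/
noncomputable def hess {m : ℕ} (u : EuclideanSpace ℝ (Fin m) → ℝ)
    (p x y : EuclideanSpace ℝ (Fin m)) : ℝ :=
  fderiv ℝ (fderiv ℝ u) p x y

set_option maxHeartbeats 1000000 in
theorem stmt_0 {m : ℕ} (hm : 1 ≤ m)
    (u : EuclideanSpace ℝ (Fin m) → ℝ)
    (hsm : ContDiff ℝ (⊤ : ℕ∞) u)
    (hproper : ∀ K : Set ℝ, IsCompact K → IsCompact (u ⁻¹' K))
    (hnonneg : ∀ p, 0 ≤ u p)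
    (p₀ : EuclideanSpace ℝ (Fin m))
    (hcrit : ∀ p, fderiv ℝ u p = 0 ↔ p = p₀)
    (hu0 : u p₀ = 0)
    (hposdef₀ : ∀ x : EuclideanSpace ℝ (Fin m), x ≠ 0 → 0 < hess u p₀ x x)
    (hlevels : ∀ p, p ≠ p₀ → ∀ x : EuclideanSpace ℝ (Fin m), x ≠ 0 →
      fderiv ℝ u p x = 0 → 0 < hess u p x x)
    (N : EuclideanSpace ℝ (Fin m) → EuclideanSpace ℝ (Fin m))
    (hNsm : ContDiffOn ℝ (⊤ : ℕ∞) N {p₀}ᶜ)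
    (hN : ∀ p, p ≠ p₀ → 0 < fderiv ℝ u p (N p))
    (h : ℝ → ℝ) (hcont : ContinuousOn h (Ici 0))
    (hμ : ∀ a : ℝ, 0 < a → ∀ p, u p = a → ∀ x : EuclideanSpace ℝ (Fin m), x ≠ 0 →
      fderiv ℝ u p x = 0 →
      h a ≤ (hess u p x x * hess u p (N p) (N p) - (hess u p x (N p)) ^ 2) /
        ((fderiv ℝ u p (N p)) ^ 2 * hess u p x x)) :
    ∃ ρ : ℝ → ℝ, ContDiffOn ℝ (⊤ : ℕ∞) ρ (Ici 0) ∧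
      (∀ t ∈ Ici (0 : ℝ), 0 ≤ ρ t) ∧
      (∀ t ∈ Ici (0 : ℝ), 1 ≤ derivWithin ρ (Ici 0) t) ∧
      (∀ K : Set ℝ, IsCompact K → IsCompact ((ρ ∘ u) ⁻¹' K)) ∧
      (∀ p, ∀ x : EuclideanSpace ℝ (Fin m), x ≠ 0 → 0 < hess (ρ ∘ u) p x x) := by
  -- continuity facts
  have hDu2 : ContDiff ℝ (⊤ : ℕ∞) (fderiv ℝ u) := hsm.fderiv_right (by simp)
  have contA : Continuous (fderiv ℝ (fderiv ℝ u)) := hDu2.continuous_fderiv (by simp)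
  have contDu : Continuous (fderiv ℝ u) := hsm.continuous_fderiv (by simp)
  -- Step A : uniform constant on sublevel sets
  have key : ∀ b : ℝ, ∃ c : ℝ, 0 ≤ c ∧ ∀ p, u p ≤ b → ∀ x : EuclideanSpace ℝ (Fin m), ‖x‖ = 1 →
      0 < hess u p x x + c * (fderiv ℝ u p x) ^ 2 := by
    intro b
    have hScomp : IsCompact ((u ⁻¹' Icc 0 b) ×ˢ Metric.sphere (0 : EuclideanSpace ℝ (Fin m)) 1) :=
      (hproper _ isCompact_Icc).prod (isCompact_sphere 0 1)
    set U : ℕ → Set (EuclideanSpace ℝ (Fin m) × EuclideanSpace ℝ (Fin m)) := fun n =>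
      {q : EuclideanSpace ℝ (Fin m) × EuclideanSpace ℝ (Fin m) | 0 < hess u q.1 q.2 q.2 + (n : ℝ) * (fderiv ℝ u q.1 q.2) ^ 2} with hU
    have hUopen : ∀ n, IsOpen (U n) := by
      intro n
      have hcont1 : Continuous fun q : EuclideanSpace ℝ (Fin m) × EuclideanSpace ℝ (Fin m) => hess u q.1 q.2 q.2 +
          (n : ℝ) * (fderiv ℝ u q.1 q.2) ^ 2 := by
        apply Continuous.add
        · exact ((((contA.comp continuous_fst).clm_apply continuous_snd).clm_apply
            continuous_snd))
        · exact continuous_const.mul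
            (((contDu.comp continuous_fst).clm_apply continuous_snd).pow 2)
      exact isOpen_lt continuous_const hcont1
    have hcov : (u ⁻¹' Icc 0 b) ×ˢ Metric.sphere (0 : EuclideanSpace ℝ (Fin m)) 1 ⊆ ⋃ n : ℕ, U n := by
      rintro ⟨p, x⟩ ⟨hp, hx⟩
      have hx1 : ‖x‖ = 1 := by simpa using hx
      have hx0 : x ≠ 0 := by
        intro h0; rw [h0] at hx1; simp at hx1
      by_cases hd : fderiv ℝ u p x = 0
      · have hpos : 0 < hess u p x x := by
          by_cases hpp : p = p₀
          · exact hpp ▸ hposdef₀ x hx0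
          · exact hlevels p hpp x hx0 hd
        exact mem_iUnion.2 ⟨0, by simpa [hU, hd] using hpos⟩
      · obtain ⟨n, hn⟩ := exists_nat_gt (-(hess u p x x) / (fderiv ℝ u p x) ^ 2)
        have h2 : 0 < (fderiv ℝ u p x) ^ 2 := by positivity
        have := (div_lt_iff₀ h2).mp hn
        exact mem_iUnion.2 ⟨n, by simp only [hU, mem_setOf_eq]; nlinarith⟩
    obtain ⟨s, hs⟩ := hScomp.elim_finite_subcover U hUopen hcov
    refine ⟨(s.sup id : ℕ), Nat.cast_nonneg _, ?_⟩
    intro p hpb x hx1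
    have hmem : (p, x) ∈ (u ⁻¹' Icc 0 b) ×ˢ Metric.sphere (0 : EuclideanSpace ℝ (Fin m)) 1 :=
      ⟨⟨hnonneg p, hpb⟩, by simpa using hx1⟩
    obtain ⟨n, hns, hn⟩ := mem_iUnion₂.1 (hs hmem)
    have hle : (n : ℝ) ≤ ((s.sup id : ℕ) : ℝ) := by
      exact_mod_cast Finset.le_sup (f := id) hns
    have hd2 : 0 ≤ (fderiv ℝ u p x) ^ 2 := sq_nonneg _
    have hn' : 0 < hess u p x x + (n : ℝ) * (fderiv ℝ u p x) ^ 2 := hn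
    nlinarith [mul_le_mul_of_nonneg_right hle hd2]
  -- choose constants
  choose C hC0 hC using key
  -- the target lower bounds for the derivative of the exponent
  set M : ℕ → ℝ := fun n => C ((n : ℝ) + 1) + 1 with hM
  have hM1 : ∀ n, 1 ≤ M n := fun n => by
    have := hC0 ((n : ℝ) + 1); simp only [hM]; linarith
  have hMpos : ∀ n, 0 < M n := fun n => lt_of_lt_of_le one_pos (hM1 n)
  -- the degrees
  set K : ℕ → ℕ := fun n => n + 1 + (Finset.range (n + 1)).sum (fun i => ⌈M i⌉₊) with hK
  have hKn_lt : ∀ n, n < K n := fun n => by simp only [hK]; omega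
  have hKmono : StrictMono K := by
    apply strictMono_nat_of_lt_succ
    intro n
    simp only [hK, Finset.sum_range_succ]
    omega
  have hKM : ∀ n, M n ≤ (2 : ℝ) ^ (K n) := by
    intro n
    have h1 : M n ≤ (⌈M n⌉₊ : ℝ) := Nat.le_ceil _
    have h2 : (⌈M n⌉₊ : ℝ) ≤ (2 : ℝ) ^ (⌈M n⌉₊) := by
      have : ⌈M n⌉₊ < 2 ^ ⌈M n⌉₊ := Nat.lt_two_pow_self
      calc (⌈M n⌉₊ : ℝ) ≤ ((2 ^ ⌈M n⌉₊ : ℕ) : ℝ) := by exact_mod_cast this.le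
      _ = (2 : ℝ) ^ (⌈M n⌉₊) := by push_cast; ring
    have h3 : ⌈M n⌉₊ ≤ K n := by
      have : ⌈M n⌉₊ ≤ (Finset.range (n + 1)).sum (fun i => ⌈M i⌉₊) :=
        Finset.single_le_sum (f := fun i => ⌈M i⌉₊) (fun i _ => Nat.zero_le _)
          (Finset.self_mem_range_succ n)
      simp only [hK]; omega
    calc M n ≤ (⌈M n⌉₊ : ℝ) := h1
    _ ≤ (2 : ℝ) ^ (⌈M n⌉₊) := h2
    _ ≤ (2 : ℝ) ^ (K n) := pow_le_pow_right₀ one_le_two h3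
  -- the coefficients
  set q : ℕ → ℝ := fun j => (if j = 1 then M 0 else 0) +
      (Finset.range (j + 1)).sum (fun n => if K n = j ∧ 1 ≤ n then
        M n / ((j : ℝ) * (n : ℝ) ^ (j - 1)) else 0) with hq
  have hq_nonneg : ∀ j, 0 ≤ q j := by
    intro j
    apply add_nonneg
    · split <;> simp [le_of_lt (hMpos 0)]
    · apply Finset.sum_nonneg
      intro n _
      split
      · exact div_nonneg (le_of_lt (hMpos n)) (by positivity)
      · exact le_refl 0
  have hq1 : q 1 = M 0 := by
    have hsum0 : (Finset.range (1 + 1)).sum (fun n => if K n = 1 ∧ 1 ≤ n then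
        M n / ((1 : ℝ) * (n : ℝ) ^ (1 - 1)) else 0) = 0 := by
      apply Finset.sum_eq_zero
      intro n _
      rw [if_neg]
      rintro ⟨h1, h2⟩
      have := hKn_lt n
      omega
    have : q 1 = (if 1 = 1 then M 0 else 0) + (Finset.range (1 + 1)).sum
        (fun n => if K n = 1 ∧ 1 ≤ n then M n / ((1 : ℝ) * (n : ℝ) ^ (1 - 1)) else 0) := by
      simp only [hq]
      norm_num
    rw [this, hsum0, if_pos rfl, add_zero]
  have hq_single : ∀ n, 1 ≤ n → M n / ((K n : ℝ) * (n : ℝ) ^ (K n - 1)) ≤ q (K n) := by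
    intro n hn
    have hmem : n ∈ Finset.range (K n + 1) := Finset.mem_range.2 (Nat.lt_succ_of_le (hKn_lt n).le)
    have h1 : M n / ((K n : ℝ) * (n : ℝ) ^ (K n - 1)) ≤
        (Finset.range (K n + 1)).sum (fun n' => if K n' = K n ∧ 1 ≤ n' then
          M n' / ((K n : ℝ) * (n' : ℝ) ^ (K n - 1)) else 0) := by
      have := Finset.single_le_sum (f := fun n' => if K n' = K n ∧ 1 ≤ n' then
          M n' / ((K n : ℝ) * (n' : ℝ) ^ (K n - 1)) else 0)
        (fun i _ => by
          show (0:ℝ) ≤ if K i = K n ∧ 1 ≤ i then M i / ((K n : ℝ) * (i : ℝ) ^ (K n - 1)) else 0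
          by_cases h : K i = K n ∧ 1 ≤ i
          · rw [if_pos h]; exact div_nonneg (le_of_lt (hMpos i)) (by positivity)
          · rw [if_neg h]) hmem
      beta_reduce at this
      rwa [if_pos (⟨rfl, hn⟩ : K n = K n ∧ 1 ≤ n)] at this
    have h2 : (0:ℝ) ≤ if (K n : ℕ) = 1 then M 0 else 0 := by
      split <;> simp [le_of_lt (hMpos 0)]
    simp only [hq]
    exact le_add_of_nonneg_of_le h2 h1
  have hq_cases : ∀ j, j ≠ 1 → q j = 0 ∨
      ∃ n, 1 ≤ n ∧ K n = j ∧ q j = M n / ((j : ℝ) * (n : ℝ) ^ (j - 1)) := by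
    intro j hj
    by_cases hex : ∃ n, K n = j ∧ 1 ≤ n
    · obtain ⟨n, hKn, hn1⟩ := hex
      right
      refine ⟨n, hn1, hKn, ?_⟩
      simp only [hq, if_neg hj, zero_add]
      rw [Finset.sum_eq_single_of_mem n]
      · rw [if_pos ⟨hKn, hn1⟩]
      · exact Finset.mem_range.2 (by have := hKn_lt n; omega)
      · intro b _ hbn
        rw [if_neg]
        rintro ⟨hKb, _⟩
        exact hbn (hKmono.injective (hKb.trans hKn.symm))
    · left
      simp only [hq, if_neg hj, zero_add]
      apply Finset.sum_eq_zero
      intro n _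
      rw [if_neg]
      rintro ⟨h1, h2⟩
      exact hex ⟨n, h1, h2⟩
  -- master summability
  have Smaster : ∀ R : ℝ, 1 ≤ R →
      Summable (fun j => q j * (((j : ℝ) + 1) ^ 2 * R ^ j)) := by
    intro R hR
    apply Summable.of_norm_bounded_eventually_nat (g := fun j => 4 * (j : ℝ) ^ 3 * (1/2 : ℝ) ^ j)
    · exact ((summable_pow_mul_geometric_of_norm_lt_one 3
        (r := (1/2 : ℝ)) (by rw [Real.norm_eq_abs, abs_of_nonneg] <;> norm_num)).mul_left
        4).congr (fun i => by ring)
    · set n₀ : ℕ := ⌈4 * R⌉₊ + 1 with hn₀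
      rw [Filter.eventually_atTop]
      refine ⟨K n₀, fun j hj => ?_⟩
      have hj1 : j ≠ 1 := by have h0 := hKn_lt n₀; omega
      rcases hq_cases j hj1 with h0 | ⟨n, hn1, hKn, hqj⟩
      · rw [h0]
        simp only [zero_mul, norm_zero]
        positivity
      · have hnn₀ : n₀ ≤ n := by
          rw [← hKmono.le_iff_le]
          omega
        have h4R : 4 * R ≤ (n : ℝ) := by
          have : (⌈4 * R⌉₊ : ℝ) ≤ n := by exact_mod_cast le_trans (by omega) hnn₀
          have := Nat.le_ceil (4 * R)
          linarith [Nat.le_ceil (4 * R)]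
        have hnj : (n : ℝ) ≤ (j : ℝ) := by exact_mod_cast (le_of_lt (hKn ▸ hKn_lt n))
        have hn1' : (1 : ℝ) ≤ (n : ℝ) := by exact_mod_cast hn1
        have hj1' : (1 : ℝ) ≤ (j : ℝ) := le_trans hn1' hnj
        have hjge1 : 1 ≤ j := by exact_mod_cast hj1'
        have hnpos : (0 : ℝ) < (n : ℝ) := lt_of_lt_of_le one_pos hn1'
        have hMn : M n ≤ (2 : ℝ) ^ j := hKn ▸ hKM n
        have hRpos : (0 : ℝ) < R := lt_of_lt_of_le one_pos hR
        have hqle : q j ≤ (2 : ℝ) ^ j / (n : ℝ) ^ (j - 1) := by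
          rw [hqj]
          apply div_le_div₀ (by positivity) hMn (by positivity)
          exact le_mul_of_one_le_left (by positivity) hj1'
        have hpow : (n : ℝ) ^ j = (n : ℝ) ^ (j - 1) * n := by
          rw [← pow_succ]
          congr 1
          omega
        have habs : ‖q j * (((j : ℝ) + 1) ^ 2 * R ^ j)‖ =
            q j * (((j : ℝ) + 1) ^ 2 * R ^ j) := by
          rw [Real.norm_eq_abs, abs_of_nonneg]
          have := hq_nonneg j
          positivity
        rw [habs]
        have step1 : q j * (((j : ℝ) + 1) ^ 2 * R ^ j) ≤
            ((j : ℝ) + 1) ^ 2 * ((2 * R / n) ^ j * n) := by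
          have heq : ((2 : ℝ) ^ j / (n : ℝ) ^ (j - 1)) * R ^ j = (2 * R / n) ^ j * n := by
            rw [div_pow, mul_pow]
            rw [hpow]
            field_simp
          calc q j * (((j : ℝ) + 1) ^ 2 * R ^ j)
              ≤ ((2 : ℝ) ^ j / (n : ℝ) ^ (j - 1)) * (((j : ℝ) + 1) ^ 2 * R ^ j) := by
                apply mul_le_mul_of_nonneg_right hqle (by positivity)
          _ = ((j : ℝ) + 1) ^ 2 * (((2 : ℝ) ^ j / (n : ℝ) ^ (j - 1)) * R ^ j) := by ring
          _ = ((j : ℝ) + 1) ^ 2 * ((2 * R / n) ^ j * n) := by rw [heq]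
        have step2 : (2 * R / (n : ℝ)) ^ j ≤ (1/2 : ℝ) ^ j := by
          apply pow_le_pow_left₀ (by positivity)
          rw [div_le_div_iff₀ hnpos (by norm_num : (0:ℝ) < 2)]
          linarith
        calc q j * (((j : ℝ) + 1) ^ 2 * R ^ j)
            ≤ ((j : ℝ) + 1) ^ 2 * ((2 * R / n) ^ j * n) := step1
        _ ≤ ((j : ℝ) + 1) ^ 2 * ((1/2 : ℝ) ^ j * (j : ℝ)) := by
            apply mul_le_mul_of_nonneg_left _ (by positivity)
            apply mul_le_mul step2 hnj (by positivity) (by positivity)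
        _ ≤ 4 * (j : ℝ) ^ 3 * (1/2 : ℝ) ^ j := by
            have h5 : ((j : ℝ) + 1) ^ 2 ≤ 4 * (j : ℝ) ^ 2 := by nlinarith
            have h6 : (0 : ℝ) ≤ (1/2 : ℝ) ^ j * (j : ℝ) := by positivity
            calc ((j : ℝ) + 1) ^ 2 * ((1/2 : ℝ) ^ j * (j : ℝ))
                ≤ 4 * (j : ℝ) ^ 2 * ((1/2 : ℝ) ^ j * (j : ℝ)) :=
                  mul_le_mul_of_nonneg_right h5 h6
            _ = 4 * (j : ℝ) ^ 3 * (1/2 : ℝ) ^ j := by ring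
  -- pointwise bound helper
  have Hpt : ∀ (R a : ℝ), 1 ≤ R → |a| ≤ R → ∀ (j : ℕ) (c : ℝ) (e : ℕ), 0 ≤ c →
      c ≤ ((j : ℝ) + 1) ^ 2 → e ≤ j →
      ‖q j * (c * a ^ e)‖ ≤ q j * (((j : ℝ) + 1) ^ 2 * R ^ j) := by
    intro R a hR ha j c e hc hcle hej
    have h1 : ‖q j * (c * a ^ e)‖ = q j * (c * |a| ^ e) := by
      rw [Real.norm_eq_abs, abs_mul, abs_mul, abs_pow,
        abs_of_nonneg (hq_nonneg j), abs_of_nonneg hc]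
    rw [h1]
    apply mul_le_mul_of_nonneg_left _ (hq_nonneg j)
    apply mul_le_mul hcle _ (by positivity) (by positivity)
    calc |a| ^ e ≤ R ^ e := pow_le_pow_left₀ (abs_nonneg a) ha e
    _ ≤ R ^ j := pow_le_pow_right₀ hR hej
  -- the functions
  set W : ℝ → ℝ := FormalMultilinearSeries.ofScalarsSum q with hWdef
  have hWeq : ∀ x : ℝ, W x = ∑' j, q j * x ^ j := by
    intro x
    rw [hWdef, FormalMultilinearSeries.ofScalars_sum_eq]
    simp [smul_eq_mul]
  set Dfun : ℝ → ℝ := fun y => ∑' j, q j * ((j : ℝ) * y ^ (j - 1)) with hDdef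
  set D2 : ℝ → ℝ := fun y => ∑' j, q j * ((j : ℝ) * (((j - 1 : ℕ) : ℝ) * y ^ (j - 1 - 1)))
    with hD2def
  -- summability at a point
  have hsumW : ∀ a : ℝ, Summable (fun j => q j * a ^ j) := by
    intro a
    apply Summable.of_norm_bounded (Smaster (|a| + 1) (by linarith [abs_nonneg a]))
    intro j
    have := Hpt (|a| + 1) a (by linarith [abs_nonneg a]) (by linarith) j 1 j zero_le_one
      (by nlinarith [Nat.cast_nonneg (α := ℝ) j]) le_rfl
    simpa using this
  have hsumD1 : ∀ a : ℝ, Summable (fun j => q j * ((j : ℝ) * a ^ (j - 1))) := by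
    intro a
    apply Summable.of_norm_bounded (Smaster (|a| + 1) (by linarith [abs_nonneg a]))
    intro j
    exact Hpt (|a| + 1) a (by linarith [abs_nonneg a]) (by linarith) j (j : ℝ) (j - 1)
      (Nat.cast_nonneg j) (by nlinarith [Nat.cast_nonneg (α := ℝ) j]) (Nat.sub_le j 1)
  -- nonnegativity of the series
  have hDnonneg : ∀ a : ℝ, 0 ≤ a → 0 ≤ Dfun a := by
    intro a ha
    apply tsum_nonneg
    intro j
    exact mul_nonneg (hq_nonneg j) (mul_nonneg (Nat.cast_nonneg j) (pow_nonneg ha _))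
  have hD2nonneg : ∀ a : ℝ, 0 ≤ a → 0 ≤ D2 a := by
    intro a ha
    apply tsum_nonneg
    intro j
    exact mul_nonneg (hq_nonneg j) (mul_nonneg (Nat.cast_nonneg j)
      (mul_nonneg (Nat.cast_nonneg _) (pow_nonneg ha _)))
  have hWnonneg : ∀ a : ℝ, 0 ≤ a → 0 ≤ W a := by
    intro a ha
    rw [hWeq]
    exact tsum_nonneg fun j => mul_nonneg (hq_nonneg j) (pow_nonneg ha _)
  have hW0le : ∀ a : ℝ, 0 ≤ a → W 0 ≤ W a := by
    intro a ha
    rw [hWeq, hWeq]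
    apply Summable.tsum_le_tsum _ (hsumW 0) (hsumW a)
    intro j
    rcases Nat.eq_zero_or_pos j with rfl | hj
    · simp
    · rw [zero_pow (by omega)]
      rw [mul_zero]
      exact mul_nonneg (hq_nonneg j) (pow_nonneg ha _)
  -- term-by-term derivatives
  have hW' : ∀ y : ℝ, HasDerivAt W (Dfun y) y := by
    intro y
    set R : ℝ := |y| + 2 with hRdef
    have hR1 : (1 : ℝ) ≤ R := by simp only [hRdef]; linarith [abs_nonneg y]
    have hRpos : (0 : ℝ) < R := lt_of_lt_of_le one_pos hR1
    have hymem : y ∈ Metric.ball (0 : ℝ) R := by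
      simp only [Metric.mem_ball, Real.dist_eq, sub_zero, hRdef]
      linarith
    have hder := hasDerivAt_tsum_of_isPreconnected
      (u := fun j => q j * (((j : ℝ) + 1) ^ 2 * R ^ j))
      (F := ℝ) (g := fun j z => q j * z ^ j)
      (g' := fun j z => q j * ((j : ℝ) * z ^ (j - 1)))
      (Smaster R hR1) Metric.isOpen_ball (convex_ball (0 : ℝ) R).isPreconnected
      (fun j z _ => by simpa using (hasDerivAt_pow j z).const_mul (q j))
      (fun j z hz => by
        have hzR : |z| ≤ R := by
          have := Metric.mem_ball.mp hz
          rw [Real.dist_eq, sub_zero] at this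
          linarith
        exact Hpt R z hR1 hzR j (j : ℝ) (j - 1) (Nat.cast_nonneg j)
          (by nlinarith [Nat.cast_nonneg (α := ℝ) j]) (Nat.sub_le j 1))
      (Metric.mem_ball_self hRpos) (hsumW 0) hymem
    have hWfun : W = fun z => ∑' j, q j * z ^ j := funext hWeq
    rw [hWfun]
    simp only [hDdef]
    exact hder
  have hD' : ∀ y : ℝ, HasDerivAt Dfun (D2 y) y := by
    intro y
    set R : ℝ := |y| + 2 with hRdef
    have hR1 : (1 : ℝ) ≤ R := by simp only [hRdef]; linarith [abs_nonneg y]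
    have hRpos : (0 : ℝ) < R := lt_of_lt_of_le one_pos hR1
    have hymem : y ∈ Metric.ball (0 : ℝ) R := by
      simp only [Metric.mem_ball, Real.dist_eq, sub_zero, hRdef]
      linarith
    have hder := hasDerivAt_tsum_of_isPreconnected
      (u := fun j => q j * (((j : ℝ) + 1) ^ 2 * R ^ j))
      (F := ℝ) (g := fun j z => q j * ((j : ℝ) * z ^ (j - 1)))
      (g' := fun j z => q j * ((j : ℝ) * (((j - 1 : ℕ) : ℝ) * z ^ (j - 1 - 1))))
      (Smaster R hR1) Metric.isOpen_ball (convex_ball (0 : ℝ) R).isPreconnected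
      (fun j z _ => by
        simpa [mul_assoc] using (hasDerivAt_pow (j - 1) z).const_mul (q j * (j : ℝ)))
      (fun j z hz => by
        have hzR : |z| ≤ R := by
          have := Metric.mem_ball.mp hz
          rw [Real.dist_eq, sub_zero] at this
          linarith
        have heq : q j * ((j : ℝ) * (((j - 1 : ℕ) : ℝ) * z ^ (j - 1 - 1))) =
            q j * (((j : ℝ) * ((j - 1 : ℕ) : ℝ)) * z ^ (j - 1 - 1)) := by ring
        beta_reduce
        rw [heq]
        have hc1 : ((j - 1 : ℕ) : ℝ) ≤ (j : ℝ) := Nat.cast_le.mpr (Nat.sub_le j 1)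
        exact Hpt R z hR1 hzR j ((j : ℝ) * ((j - 1 : ℕ) : ℝ)) (j - 1 - 1)
          (mul_nonneg (Nat.cast_nonneg j) (Nat.cast_nonneg _))
          (by nlinarith [Nat.cast_nonneg (α := ℝ) j, Nat.cast_nonneg (α := ℝ) (j - 1)])
          (le_trans (Nat.sub_le _ 1) (Nat.sub_le j 1)))
      (Metric.mem_ball_self hRpos) (hsumD1 0) hymem
    simp only [hDdef, hD2def]
    exact hder
  -- analyticity of W
  have hrad : (FormalMultilinearSeries.ofScalars ℝ q).radius = ⊤ := by
    apply FormalMultilinearSeries.radius_eq_top_of_summable_norm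
    intro r'
    apply Summable.of_norm_bounded (Smaster ((r' : ℝ) + 1) (by linarith [r'.coe_nonneg]))
    intro j
    have h1 := Hpt ((r' : ℝ) + 1) (r' : ℝ) (by linarith [r'.coe_nonneg])
      (by rw [abs_of_nonneg r'.coe_nonneg]; linarith) j 1 j zero_le_one
      (by nlinarith [Nat.cast_nonneg (α := ℝ) j]) le_rfl
    calc ‖‖FormalMultilinearSeries.ofScalars ℝ q j‖ * (r' : ℝ) ^ j‖
        = ‖q j * (1 * (r' : ℝ) ^ (j - 0))‖ := by
          rw [FormalMultilinearSeries.ofScalars_norm]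
          simp [Real.norm_eq_abs, abs_mul, abs_pow, abs_abs]
    _ ≤ q j * (((j : ℝ) + 1) ^ 2 * ((r' : ℝ) + 1) ^ j) := h1
  have hball : HasFPowerSeriesOnBall W (FormalMultilinearSeries.ofScalars ℝ q) 0 ⊤ := by
    have h := (FormalMultilinearSeries.ofScalars ℝ q).hasFPowerSeriesOnBall
      (by rw [hrad]; exact ENNReal.zero_lt_top)
    rw [hrad] at h
    exact h
  have hWana : AnalyticOnNhd ℝ W univ := fun z _ =>
    hball.analyticOnNhd z (by rw [EMetric.mem_ball]; exact edist_lt_top z 0)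
  have hWsmooth : ContDiff ℝ (⊤ : ℕ∞) W := hWana.contDiff
  -- the reparametrization
  set ρ : ℝ → ℝ := fun y => y + Real.exp (W y) - Real.exp (W 0) with hρdef
  set r : ℝ → ℝ := fun y => 1 + Real.exp (W y) * Dfun y with hrdef
  set r2 : ℝ → ℝ := fun y => Real.exp (W y) * Dfun y * Dfun y + Real.exp (W y) * D2 y
    with hr2def
  have hρ' : ∀ y, HasDerivAt ρ (r y) y := by
    intro y
    have h := ((hasDerivAt_id y).add ((hW' y).exp)).sub_const (Real.exp (W 0))
    simpa [hρdef, hrdef] using h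
  have hr' : ∀ y, HasDerivAt r (r2 y) y := by
    intro y
    have h := (((hW' y).exp.mul (hD' y)).const_add 1)
    simpa [hrdef, hr2def] using h
  have hρsmooth : ContDiff ℝ (⊤ : ℕ∞) ρ :=
    (contDiff_id.add (Real.contDiff_exp.comp hWsmooth)).sub contDiff_const
  have hr1 : ∀ a : ℝ, 0 ≤ a → 1 ≤ r a := by
    intro a ha
    have := mul_nonneg (Real.exp_nonneg (W a)) (hDnonneg a ha)
    simp only [hrdef]
    linarith
  have hrposall : ∀ a : ℝ, 0 ≤ a → 0 < r a := fun a ha => lt_of_lt_of_le one_pos (hr1 a ha)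
  have hρ_ge : ∀ t : ℝ, 0 ≤ t → t ≤ ρ t := by
    intro t ht
    have := Real.exp_le_exp.mpr (hW0le t ht)
    simp only [hρdef]
    linarith
  -- lower bound for Dfun
  have hDge : ∀ a : ℝ, 0 ≤ a → M ⌊a⌋₊ ≤ Dfun a := by
    intro a ha
    have hDtsum : Dfun a = ∑' j, q j * ((j : ℝ) * a ^ (j - 1)) := by rw [hDdef]
    have hterm_nonneg : ∀ j : ℕ, 0 ≤ q j * ((j : ℝ) * a ^ (j - 1)) := fun j =>
      mul_nonneg (hq_nonneg j) (mul_nonneg (Nat.cast_nonneg j) (pow_nonneg ha _))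
    rcases Nat.eq_zero_or_pos ⌊a⌋₊ with hn0 | hn1
    · have h1 := Summable.le_tsum (hsumD1 a) 1 (fun j _ => hterm_nonneg j)
      rw [← hDtsum] at h1
      rw [hn0]
      calc M 0 = q 1 * ((1 : ℝ) * a ^ (1 - 1)) := by rw [hq1]; norm_num
      _ ≤ Dfun a := by simpa using h1
    · set n := ⌊a⌋₊ with hn
      have han : (n : ℝ) ≤ a := Nat.floor_le ha
      have hn1' : (1 : ℝ) ≤ (n : ℝ) := by exact_mod_cast hn1
      have hKpos : (0 : ℝ) < (K n : ℝ) * (n : ℝ) ^ (K n - 1) := by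
        have h1 : (0 : ℝ) < (K n : ℝ) := by
          have h0 : 0 < K n := by have := hKn_lt n; omega
          exact_mod_cast h0
        have h2 : (0 : ℝ) < (n : ℝ) ^ (K n - 1) := by positivity
        exact mul_pos h1 h2
      have h1 := Summable.le_tsum (hsumD1 a) (K n) (fun j _ => hterm_nonneg j)
      rw [← hDtsum] at h1
      calc M n = (M n / ((K n : ℝ) * (n : ℝ) ^ (K n - 1))) *
          ((K n : ℝ) * (n : ℝ) ^ (K n - 1)) := by
            rw [div_mul_cancel₀ _ (ne_of_gt hKpos)]
      _ ≤ q (K n) * ((K n : ℝ) * (n : ℝ) ^ (K n - 1)) :=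
            mul_le_mul_of_nonneg_right (hq_single n hn1) (le_of_lt hKpos)
      _ ≤ q (K n) * ((K n : ℝ) * a ^ (K n - 1)) := by
            apply mul_le_mul_of_nonneg_left _ (hq_nonneg _)
            apply mul_le_mul_of_nonneg_left _ (Nat.cast_nonneg _)
            exact pow_le_pow_left₀ (by positivity) han _
      _ ≤ Dfun a := h1
  -- derivative machinery for the composition
  have hDu2 : ContDiff ℝ (⊤ : ℕ∞) (fderiv ℝ u) := hsm.fderiv_right (by simp)
  have hu' : ∀ p : EuclideanSpace ℝ (Fin m), HasFDerivAt u (fderiv ℝ u p) p := fun p =>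
    (hsm.differentiable (by simp) p).hasFDerivAt
  have hu'' : ∀ p : EuclideanSpace ℝ (Fin m),
      HasFDerivAt (fderiv ℝ u) (fderiv ℝ (fderiv ℝ u) p) p := fun p =>
    (hDu2.differentiable (by simp) p).hasFDerivAt
  have hf1 : ∀ pt : EuclideanSpace ℝ (Fin m),
      HasFDerivAt (ρ ∘ u) (r (u pt) • fderiv ℝ u pt) pt := fun pt =>
    (hρ' (u pt)).comp_hasFDerivAt pt (hu' pt)
  have hfderiv_eq : fderiv ℝ (ρ ∘ u) = fun pt => r (u pt) • fderiv ℝ u pt :=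
    funext fun pt => (hf1 pt).fderiv
  have hc' : ∀ pt : EuclideanSpace ℝ (Fin m),
      HasFDerivAt (fun z => r (u z)) ((r2 (u pt)) • fderiv ℝ u pt) pt :=
    fun pt => (hr' (u pt)).comp_hasFDerivAt pt (hu' pt)
  have hsnd : ∀ pt : EuclideanSpace ℝ (Fin m),
      HasFDerivAt (fun z => r (u z) • fderiv ℝ u z)
      (r (u pt) • fderiv ℝ (fderiv ℝ u) pt +
        (((r2 (u pt)) • fderiv ℝ u pt).smulRight (fderiv ℝ u pt))) pt :=
    fun pt => (hc' pt).smul (hu'' pt)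
  have hhess : ∀ pt x y : EuclideanSpace ℝ (Fin m), hess (ρ ∘ u) pt x y =
      r (u pt) * hess u pt x y + (r2 (u pt) * fderiv ℝ u pt x) * fderiv ℝ u pt y := by
    intro pt x y
    show fderiv ℝ (fderiv ℝ (ρ ∘ u)) pt x y = _
    rw [hfderiv_eq, (hsnd pt).fderiv]
    simp [hess, ContinuousLinearMap.add_apply, ContinuousLinearMap.smul_apply,
      ContinuousLinearMap.smulRight_apply, smul_eq_mul]
  refine ⟨ρ, hρsmooth.contDiffOn, ?_, ?_, ?_, ?_⟩
  · intro t ht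
    exact le_trans ht (hρ_ge t ht)
  · intro t ht
    have : derivWithin ρ (Ici 0) t = r t :=
      (hρ' t).hasDerivWithinAt.derivWithin (uniqueDiffOn_Ici 0 t ht)
    rw [this]
    exact hr1 t ht
  · intro Kc hKc
    obtain ⟨R, hR⟩ := hKc.bddAbove
    have hclosed : IsClosed ((ρ ∘ u) ⁻¹' Kc) :=
      hKc.isClosed.preimage (hρsmooth.continuous.comp hsm.continuous)
    refine IsCompact.of_isClosed_subset (hproper (Icc 0 R) isCompact_Icc) hclosed ?_
    intro pt hpt
    exact ⟨hnonneg pt, le_trans (hρ_ge (u pt) (hnonneg pt)) (hR hpt)⟩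
  · intro pt x hx
    set a := u pt with ha
    have ha0 : 0 ≤ a := hnonneg pt
    set xh : EuclideanSpace ℝ (Fin m) := ‖x‖⁻¹ • x with hxh
    have hnorm : ‖xh‖ = 1 := norm_smul_inv_norm hx
    have hnx : (0 : ℝ) < ‖x‖ := norm_pos_iff.2 hx
    have hxeq : x = ‖x‖ • xh := by
      rw [hxh, smul_smul, mul_inv_cancel₀ (ne_of_gt hnx), one_smul]
    set c : ℝ := C ((⌊a⌋₊ : ℝ) + 1) with hcdef
    have hc0 : 0 ≤ c := hC0 _
    have hale : a ≤ (⌊a⌋₊ : ℝ) + 1 := le_of_lt (Nat.lt_floor_add_one a)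
    have hkey : 0 < hess u pt xh xh + c * (fderiv ℝ u pt xh) ^ 2 :=
      hC ((⌊a⌋₊ : ℝ) + 1) pt hale xh hnorm
    have hDc : c + 1 ≤ Dfun a := by
      have := hDge a ha0
      simp only [hM] at this
      simpa [hcdef] using this
    have hE1 : 1 ≤ Real.exp (W a) := Real.one_le_exp (hWnonneg a ha0)
    have hED2 : 0 ≤ Real.exp (W a) * D2 a :=
      mul_nonneg (Real.exp_nonneg _) (hD2nonneg a ha0)
    have hDa0 : 0 ≤ Dfun a := hDnonneg a ha0
    have hEDf : c + 1 ≤ Real.exp (W a) * Dfun a :=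
      le_trans hDc (le_mul_of_one_le_left hDa0 hE1)
    have hEDf0 : 0 ≤ Real.exp (W a) * Dfun a := le_trans (by linarith) hEDf
    have hrc : c * r a ≤ r2 a := by
      have h7 : (Real.exp (W a) * Dfun a) * (c + 1) ≤
          (Real.exp (W a) * Dfun a) * Dfun a :=
        mul_le_mul_of_nonneg_left hDc hEDf0
      simp only [hrdef, hr2def]
      nlinarith
    have hra1 : 1 ≤ r a := hr1 a ha0
    have hHxx : hess u pt x x = ‖x‖ ^ 2 * hess u pt xh xh := by
      conv_lhs => rw [hxeq]
      simp [hess, map_smul, ContinuousLinearMap.smul_apply, smul_eq_mul]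
      ring
    have hDux : fderiv ℝ u pt x = ‖x‖ * fderiv ℝ u pt xh := by
      conv_lhs => rw [hxeq]
      rw [map_smul, smul_eq_mul]
    have heq2 : hess (ρ ∘ u) pt x x =
        ‖x‖ ^ 2 * (r a * hess u pt xh xh + r2 a * (fderiv ℝ u pt xh) ^ 2) := by
      rw [hhess pt x x, hHxx, hDux, ← ha]
      ring
    rw [heq2]
    apply mul_pos (by positivity)
    have hd2 : 0 ≤ (fderiv ℝ u pt xh) ^ 2 := sq_nonneg _
    nlinarith [mul_nonneg (sub_nonneg.2 hrc) hd2]
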